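/- For real parameters θ, θ' and α₁, α₂ ∈ [0,1], define unit vectors in ℂ²: η₀ = cos(θ'/2)e₀ + sin(θ'/2)e₁, η₁ = cos(θ/2)e₀ + sin(θ/2)e₁, η₀^⊥ = sin(θ'/2)e₀ − cos(θ'/2)e₁, η₁^⊥ = sin(θ/2)e₀ − cos(θ/2)e₁, and the two-qubit vectors χ₁ = √α₁ (e₀ ⊗ η₀) + √(1−α₁) (e₁ ⊗ η₁) and χ₂ = √α₂ (e₀ ⊗ η₀^⊥) + √(1−α₂) (e₁ ⊗ η₁^⊥). Then Tr₁ |χ₁⟩⟨χ₁| = Tr₁ |χ₂⟩⟨χ₂| and Tr₂ |χ₁⟩⟨χ₁| = Tr₂ |χ₂⟩⟨χ₂| hold if and only if α₁ = 1/2, α₂ = 1/2, and cos((θ' − θ)/2) = 0 (equivalently θ' ≡ θ + π (mod 2π)); and in that case all four partial traces equal (1/2)·I₂. -/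

import Mathlib

open Matrix Kronecker Polynomial ComplexOrder

noncomputable section

/-- Partial trace over the first subsystem of a two-qubit (4×4) matrix. -/
def ptr1 (M : Matrix (Fin 2 × Fin 2) (Fin 2 × Fin 2) ℂ) : Matrix (Fin 2) (Fin 2) ℂ :=
  Matrix.of fun j l => ∑ i, M (i, j) (i, l)

/-- Partial trace over the second subsystem of a two-qubit (4×4) matrix. -/
def ptr2 (M : Matrix (Fin 2 × Fin 2) (Fin 2 × Fin 2) ℂ) : Matrix (Fin 2) (Fin 2) ℂ :=
  Matrix.of fun i k => ∑ j, M (i, j) (k, j)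

/-- Rank-one projection |v⟩⟨v| of a qubit vector. -/
def proj2 (v : Fin 2 → ℂ) : Matrix (Fin 2) (Fin 2) ℂ :=
  Matrix.of fun i j => v i * star (v j)

/-- Rank-one projection |v⟩⟨v| of a two-qubit vector. -/
def proj4 (v : Fin 2 × Fin 2 → ℂ) : Matrix (Fin 2 × Fin 2) (Fin 2 × Fin 2) ℂ :=
  Matrix.of fun p q => v p * star (v q)

/-- Kronecker (tensor) product of two qubit vectors. -/
def tens (a b : Fin 2 → ℂ) : Fin 2 × Fin 2 → ℂ := fun p => a p.1 * b p.2

/-- Unit (normalized) vector. -/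
def UnitVec {α : Type*} [Fintype α] (v : α → ℂ) : Prop := ∑ i, v i * star (v i) = 1

/-- Hermitian inner product of two-qubit vectors. -/
def inner4 (v w : Fin 2 × Fin 2 → ℂ) : ℂ := ∑ p, star (v p) * w p

/-- A 2×2 density matrix: positive semidefinite with unit trace. -/
def IsDensity2 (A : Matrix (Fin 2) (Fin 2) ℂ) : Prop := A.PosSemidef ∧ A.trace = 1

/-- Separability of a two-qubit density matrix: a finite convex combination of
Kronecker products of 2×2 density matrices. -/
def Separable4 (ρ : Matrix (Fin 2 × Fin 2) (Fin 2 × Fin 2) ℂ) : Prop :=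
  ∃ (n : ℕ) (w : Fin n → ℝ) (A B : Fin n → Matrix (Fin 2) (Fin 2) ℂ),
    (∀ i, 0 ≤ w i) ∧ (∑ i, w i = 1) ∧
    (∀ i, IsDensity2 (A i)) ∧ (∀ i, IsDensity2 (B i)) ∧
    ρ = ∑ i, (w i : ℂ) • (A i ⊗ₖ B i)

/-- Standard basis vector e₀ of ℂ². -/
def e₀ : Fin 2 → ℂ := ![1, 0]

/-- Standard basis vector e₁ of ℂ². -/
def e₁ : Fin 2 → ℂ := ![0, 1]

/-- η₀-type vector: cos(t/2)e₀ + sin(t/2)e₁. -/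
def eta (t : ℝ) : Fin 2 → ℂ := ![(Real.cos (t/2) : ℂ), (Real.sin (t/2) : ℂ)]

/-- η⊥-type vector: sin(t/2)e₀ − cos(t/2)e₁. -/
def etaPerp (t : ℝ) : Fin 2 → ℂ := ![(Real.sin (t/2) : ℂ), (-(Real.cos (t/2)) : ℂ)]

/-- χ₁ = √α₁ (e₀ ⊗ η₀) + √(1−α₁) (e₁ ⊗ η₁), with η₀ at angle θ' and η₁ at angle θ. -/
def chi1 (θ θ' α₁ : ℝ) : Fin 2 × Fin 2 → ℂ :=
  fun q => (Real.sqrt α₁ : ℂ) * tens e₀ (eta θ') q + (Real.sqrt (1 - α₁) : ℂ) * tens e₁ (eta θ) q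

/-- χ₂ = √α₂ (e₀ ⊗ η₀^⊥) + √(1−α₂) (e₁ ⊗ η₁^⊥). -/
def chi2 (θ θ' α₂ : ℝ) : Fin 2 × Fin 2 → ℂ :=
  fun q => (Real.sqrt α₂ : ℂ) * tens e₀ (etaPerp θ') q
    + (Real.sqrt (1 - α₂) : ℂ) * tens e₁ (etaPerp θ) q

/-! All four partial traces are real qubit states `(I + x σ_z + y σ_x) / 2`. Tracing out the
first qubit of `χ₁` leaves the mixture `α₁ |η₀⟩⟨η₀| + (1 - α₁) |η₁⟩⟨η₁|`, with Bloch vector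
`α₁ (cos θ', sin θ') + (1 - α₁) (cos θ, sin θ)`; for `χ₂` the orthogonal vectors `η^⊥` give the
opposite Bloch vector. Tracing out the second qubit leaves, for both `χ₁` and `χ₂`, the diagonal
`(α, 1 - α)` and the off-diagonal entry `√(α (1 - α)) cos ((θ' - θ) / 2)`. So the masking conditions
say that `α₁ = α₂` and that the Bloch vector of the mixture vanishes; its squared length
`(2α - 1)² + 4α(1 - α) cos² ((θ' - θ) / 2)` is a sum of two nonnegative terms. -/

def walgateForm (x y : ℂ) (u v : Fin 2 → ℂ) : Fin 2 × Fin 2 → ℂ :=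
  fun q => x * tens e₀ u q + y * tens e₁ v q

theorem chi1_eq_walgateForm (θ θ' α : ℝ) :
    chi1 θ θ' α = walgateForm √α √(1 - α) (_root_.eta θ') (_root_.eta θ) := rfl

theorem chi2_eq_walgateForm (θ θ' α : ℝ) :
    chi2 θ θ' α = walgateForm √α √(1 - α) (etaPerp θ') (etaPerp θ) := rfl

/-- The real qubit state `(I + x σ_z + y σ_x) / 2`. -/
def blochState (x y : ℝ) : Matrix (Fin 2) (Fin 2) ℂ :=
  (2⁻¹ : ℂ) • !![1 + (x : ℂ), y; y, 1 - x]

theorem blochState_inj {x y x' y' : ℝ} :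
    blochState x y = blochState x' y' ↔ x = x' ∧ y = y' := by
  refine ⟨fun h => ⟨?_, ?_⟩, fun ⟨hx, hy⟩ => hx ▸ hy ▸ rfl⟩
  · simpa [blochState] using congrFun₂ h 0 0
  · simpa [blochState] using congrFun₂ h 0 1

theorem blochState_zero : blochState 0 0 = (1 / 2 : ℂ) • 1 := by
  ext i j
  fin_cases i <;> fin_cases j <;> simp [blochState]

theorem smul_blochState_add_smul_blochState (a x y x' y' : ℝ) :
    (a : ℂ) • blochState x y + ((1 - a : ℝ) : ℂ) • blochState x' y' =
      blochState (a * x + (1 - a) * x') (a * y + (1 - a) * y') := by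
  ext i j
  fin_cases i <;> fin_cases j <;> simp [blochState] <;> ring

theorem ptr1_proj4_walgateForm (x y : ℂ) (u v : Fin 2 → ℂ) :
    ptr1 (proj4 (walgateForm x y u v)) = (x * star x) • proj2 u + (y * star y) • proj2 v := by
  ext j l
  simp only [ptr1, proj4, walgateForm, tens, e₀, e₁, star_add, star_mul', RCLike.star_def, of_apply,
    Fin.sum_univ_two, Fin.isValue, cons_val_zero, one_mul, zero_mul, mul_zero, add_zero, map_one, map_zero,
    cons_val_one, cons_val_fin_one, zero_add, proj2, smul_of, Matrix.add_apply, Pi.smul_apply, smul_eq_mul]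
  ring

theorem ptr2_proj4_walgateForm (x y : ℂ) (u v : Fin 2 → ℂ) :
    ptr2 (proj4 (walgateForm x y u v)) =
      !![x * star x * (u ⬝ᵥ star u), x * star y * (u ⬝ᵥ star v);
         y * star x * (v ⬝ᵥ star u), y * star y * (v ⬝ᵥ star v)] := by
  ext i k
  fin_cases i <;> fin_cases k <;>
    simp [ptr2, proj4, walgateForm, tens, e₀, e₁, dotProduct, Fin.sum_univ_two] <;> ring

theorem ofReal_sqrt_mul_star {a : ℝ} (ha : 0 ≤ a) : (√a : ℂ) * star (√a : ℂ) = a := by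
  rw [Complex.star_def, Complex.conj_ofReal, ← Complex.ofReal_mul, Real.mul_self_sqrt ha]

theorem ptr1_proj4_walgateForm_sqrt {a : ℝ} (ha : a ∈ Set.Icc 0 1) (u v : Fin 2 → ℂ) :
    ptr1 (proj4 (walgateForm √a √(1 - a) u v)) =
      (a : ℂ) • proj2 u + ((1 - a : ℝ) : ℂ) • proj2 v := by
  rw [ptr1_proj4_walgateForm, ofReal_sqrt_mul_star ha.1, ofReal_sqrt_mul_star (sub_nonneg.2 ha.2)]

theorem ptr2_proj4_walgateForm_sqrt {a : ℝ} (ha : a ∈ Set.Icc 0 1) {u v : Fin 2 → ℂ}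
    (hu : star u = u) (hv : star v = v) (hu1 : u ⬝ᵥ u = 1) (hv1 : v ⬝ᵥ v = 1) {c : ℝ}
    (huv : u ⬝ᵥ v = c) :
    ptr2 (proj4 (walgateForm √a √(1 - a) u v)) =
      blochState (2 * a - 1) (2 * (√a * √(1 - a)) * c) := by
  have hvu : v ⬝ᵥ u = c := dotProduct_comm v u ▸ huv
  rw [ptr2_proj4_walgateForm, hu, hv, hu1, hv1, huv, hvu, ofReal_sqrt_mul_star ha.1,
    ofReal_sqrt_mul_star (sub_nonneg.2 ha.2)]
  ext i j
  fin_cases i <;> fin_cases j <;> simp [blochState] <;> ring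

theorem star_eta (t : ℝ) : star (_root_.eta t) = _root_.eta t := by
  ext i
  fin_cases i <;>
    simp only [_root_.eta, Fin.zero_eta, Fin.mk_one, Fin.isValue, Pi.star_apply, cons_val_zero, cons_val_one,
      cons_val_fin_one, RCLike.star_def, Complex.conj_ofReal]

theorem star_etaPerp (t : ℝ) : star (etaPerp t) = etaPerp t := by
  ext i
  fin_cases i <;>
    simp only [etaPerp, Fin.zero_eta, Fin.mk_one, Fin.isValue, Pi.star_apply, cons_val_zero, cons_val_one,
      cons_val_fin_one, star_neg, RCLike.star_def, Complex.conj_ofReal]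

theorem eta_dotProduct_eta (s t : ℝ) : _root_.eta s ⬝ᵥ _root_.eta t = Real.cos ((s - t) / 2) := by
  rw [sub_div, Real.cos_sub]
  simp [_root_.eta, dotProduct, Fin.sum_univ_two]

theorem etaPerp_dotProduct_etaPerp (s t : ℝ) : etaPerp s ⬝ᵥ etaPerp t = Real.cos ((s - t) / 2) := by
  rw [sub_div, Real.cos_sub]
  simp [etaPerp, dotProduct, Fin.sum_univ_two]
  ring

theorem eta_dotProduct_self (t : ℝ) : _root_.eta t ⬝ᵥ _root_.eta t = 1 := by
  rw [eta_dotProduct_eta, sub_self, zero_div, Real.cos_zero, Complex.ofReal_one]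

theorem etaPerp_dotProduct_self (t : ℝ) : etaPerp t ⬝ᵥ etaPerp t = 1 := by
  rw [etaPerp_dotProduct_etaPerp, sub_self, zero_div, Real.cos_zero, Complex.ofReal_one]

theorem proj2_eta (t : ℝ) : proj2 (_root_.eta t) = blochState (Real.cos t) (Real.sin t) := by
  have hc : Real.cos t = 2 * Real.cos (t / 2) ^ 2 - 1 := by
    rw [← Real.cos_two_mul, mul_div_cancel₀ t two_ne_zero]
  have hs : Real.sin t = 2 * Real.sin (t / 2) * Real.cos (t / 2) := by
    rw [← Real.sin_two_mul, mul_div_cancel₀ t two_ne_zero]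
  have hp : (Real.sin (t / 2) : ℂ) ^ 2 + (Real.cos (t / 2) : ℂ) ^ 2 = 1 := by
    exact_mod_cast Real.sin_sq_add_cos_sq (t / 2)
  ext i j
  fin_cases i <;> fin_cases j <;>
    simp [proj2, _root_.eta, blochState, hc, hs, -Complex.ofReal_cos, -Complex.ofReal_sin] <;>
    first | ring1 | linear_combination hp

theorem etaPerp_eq_neg_eta (t : ℝ) : etaPerp t = -_root_.eta (t + Real.pi) := by
  have h : (t + Real.pi) / 2 = t / 2 + Real.pi / 2 := by ring
  ext i
  fin_cases i <;>
    simp [etaPerp, _root_.eta, h, Real.cos_add_pi_div_two, Real.sin_add_pi_div_two]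

theorem proj2_neg (v : Fin 2 → ℂ) : proj2 (-v) = proj2 v := by
  ext i j; simp [proj2]

theorem proj2_etaPerp (t : ℝ) : proj2 (etaPerp t) = blochState (-Real.cos t) (-Real.sin t) := by
  rw [etaPerp_eq_neg_eta, proj2_neg, proj2_eta, Real.cos_add_pi, Real.sin_add_pi]

theorem mixture_sq_add_sq (a s t : ℝ) :
    (a * Real.cos s + (1 - a) * Real.cos t) ^ 2 + (a * Real.sin s + (1 - a) * Real.sin t) ^ 2 =
      (2 * a - 1) ^ 2 + 4 * a * (1 - a) * Real.cos ((s - t) / 2) ^ 2 := by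
  rw [Real.cos_sq, mul_div_cancel₀ _ two_ne_zero, Real.cos_sub]
  linear_combination a ^ 2 * Real.sin_sq_add_cos_sq s + (1 - a) ^ 2 * Real.sin_sq_add_cos_sq t


theorem mixture_eq_zero_iff {a : ℝ} (ha : a ∈ Set.Icc 0 1) (s t : ℝ) :
    (a * Real.cos s + (1 - a) * Real.cos t = 0 ∧ a * Real.sin s + (1 - a) * Real.sin t = 0) ↔
      a = 1 / 2 ∧ Real.cos ((s - t) / 2) = 0 := by
  rw [← mul_self_add_mul_self_eq_zero, ← sq, ← sq, mixture_sq_add_sq]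
  constructor
  · intro h
    have hnn : 0 ≤ 4 * a * (1 - a) * Real.cos ((s - t) / 2) ^ 2 :=
      mul_nonneg (mul_nonneg (by linarith [ha.1]) (sub_nonneg.2 ha.2)) (sq_nonneg _)
    obtain rfl : a = 1 / 2 := by nlinarith [sq_nonneg (2 * a - 1)]
    norm_num at h
    exact ⟨rfl, h⟩
  · rintro ⟨rfl, hc⟩
    rw [hc]
    norm_num

section Chi

variable {θ θ' α : ℝ}

theorem ptr1_proj4_chi1 (hα : α ∈ Set.Icc 0 1) :
    ptr1 (proj4 (chi1 θ θ' α)) = blochState (α * Real.cos θ' + (1 - α) * Real.cos θ)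
      (α * Real.sin θ' + (1 - α) * Real.sin θ) := by
  rw [chi1_eq_walgateForm, ptr1_proj4_walgateForm_sqrt hα, proj2_eta, proj2_eta,
    smul_blochState_add_smul_blochState]

theorem ptr1_proj4_chi2 (hα : α ∈ Set.Icc 0 1) :
    ptr1 (proj4 (chi2 θ θ' α)) = blochState (-(α * Real.cos θ' + (1 - α) * Real.cos θ))
      (-(α * Real.sin θ' + (1 - α) * Real.sin θ)) := by
  rw [chi2_eq_walgateForm, ptr1_proj4_walgateForm_sqrt hα, proj2_etaPerp, proj2_etaPerp,
    smul_blochState_add_smul_blochState, blochState_inj]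
  constructor <;> ring

theorem ptr2_proj4_chi1 (hα : α ∈ Set.Icc 0 1) :
    ptr2 (proj4 (chi1 θ θ' α)) =
      blochState (2 * α - 1) (2 * (√α * √(1 - α)) * Real.cos ((θ' - θ) / 2)) :=
  ptr2_proj4_walgateForm_sqrt hα (star_eta _) (star_eta _) (eta_dotProduct_self _)
    (eta_dotProduct_self _) (eta_dotProduct_eta _ _)

theorem ptr2_proj4_chi2 (hα : α ∈ Set.Icc 0 1) :
    ptr2 (proj4 (chi2 θ θ' α)) =
      blochState (2 * α - 1) (2 * (√α * √(1 - α)) * Real.cos ((θ' - θ) / 2)) :=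
  ptr2_proj4_walgateForm_sqrt hα (star_etaPerp _) (star_etaPerp _) (etaPerp_dotProduct_self _)
    (etaPerp_dotProduct_self _) (etaPerp_dotProduct_etaPerp _ _)

end Chi

theorem masking_condition_for_walgate_form
    (θ θ' α₁ α₂ : ℝ) (hα₁ : α₁ ∈ Set.Icc (0 : ℝ) 1) (hα₂ : α₂ ∈ Set.Icc (0 : ℝ) 1) :
    ((ptr1 (proj4 (chi1 θ θ' α₁)) = ptr1 (proj4 (chi2 θ θ' α₂)) ∧
      ptr2 (proj4 (chi1 θ θ' α₁)) = ptr2 (proj4 (chi2 θ θ' α₂))) ↔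
      (α₁ = 1/2 ∧ α₂ = 1/2 ∧ Real.cos ((θ' - θ)/2) = 0)) ∧
    ((α₁ = 1/2 ∧ α₂ = 1/2 ∧ Real.cos ((θ' - θ)/2) = 0) →
      (ptr1 (proj4 (chi1 θ θ' α₁)) = (1/2 : ℂ) • (1 : Matrix (Fin 2) (Fin 2) ℂ) ∧
       ptr2 (proj4 (chi1 θ θ' α₁)) = (1/2 : ℂ) • (1 : Matrix (Fin 2) (Fin 2) ℂ) ∧
       ptr1 (proj4 (chi2 θ θ' α₂)) = (1/2 : ℂ) • (1 : Matrix (Fin 2) (Fin 2) ℂ) ∧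
       ptr2 (proj4 (chi2 θ θ' α₂)) = (1/2 : ℂ) • (1 : Matrix (Fin 2) (Fin 2) ℂ))) := by
  have hmix := mixture_eq_zero_iff hα₁ θ' θ
  rw [ptr1_proj4_chi1 hα₁, ptr1_proj4_chi2 hα₂, ptr2_proj4_chi1 hα₁, ptr2_proj4_chi2 hα₂,
    ← blochState_zero, blochState_inj, blochState_inj, blochState_inj, blochState_inj,
    blochState_inj]
  refine ⟨⟨?_, ?_⟩, ?_⟩
  · rintro ⟨⟨hx, hy⟩, hdiag, -⟩
    obtain rfl : α₁ = α₂ := by linarith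
    obtain ⟨h, hc⟩ := hmix.1 ⟨by linarith, by linarith⟩
    exact ⟨h, h, hc⟩
  · rintro ⟨rfl, rfl, hc⟩
    obtain ⟨hx, hy⟩ := hmix.2 ⟨rfl, hc⟩
    exact ⟨⟨by linarith, by linarith⟩, rfl, rfl⟩
  · rintro ⟨rfl, rfl, hc⟩
    obtain ⟨hx, hy⟩ := hmix.2 ⟨rfl, hc⟩
    simp only [hx, hy, hc, neg_zero, mul_zero]
    norm_num

end
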